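/- arXiv:1012.1261 — 2 statements merged into one kernel-verified Lean document; each statement's English description precedes it below -/
import Mathlib

section
/- Define the replica-symmetric trial pressure Ā(p̄,q̄) = log 2 + α E_g[log cosh(gβ√(2(1-α)p̄))] + (1-α) E_g[log cosh(gβ√(2α q̄))] + α(1-α)β²(1-q̄)(1-p̄) for p̄,q̄ ∈ [0,1], where g is a standard Gaussian. Then ∂_{p̄}Ā = α(1-α)β²(q̄ − E_g[tanh²(gβ√(2(1-α)p̄))]), and since p̄ ↦ E_g[tanh²(gβ√(2(1-α)p̄))] is nondecreasing, Ā is concave in p̄ for each fixed q̄. -/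
/-!
Differentiating under the integral sign, `d/ds E[log cosh (g s)] = E[g tanh (g s)]`, and Gaussian
integration by parts turns this into `s (1 - E[tanh² (g s)])`. With `s = β √(2 (1 - α) p)` the
factor `s ds/dp = (1 - α) β²` is constant, which gives the derivative of `Ā` in `p`. Since `tanh²`
increases with `|x|`, `E[tanh² (g s)]` increases with `|s|`, so this derivative is antitone in `p`
and `Ā` is concave.
-/

open MeasureTheory ProbabilityTheory

/-- Replica-symmetric trial pressure for the bipartite spin glass. -/
noncomputable def Abar (α β p q : ℝ) : ℝ :=
  Real.log 2
    + α * ∫ g : ℝ, Real.log (Real.cosh (g * β * Real.sqrt (2 * (1 - α) * p)))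
        ∂(gaussianReal 0 1)
    + (1 - α) * ∫ g : ℝ, Real.log (Real.cosh (g * β * Real.sqrt (2 * α * q)))
        ∂(gaussianReal 0 1)
    + α * (1 - α) * β ^ 2 * (1 - q) * (1 - p)

open Real Set Filter
open scoped NNReal

namespace Real

lemma one_sub_tanh_sq (x : ℝ) : 1 - tanh x ^ 2 = (cosh x ^ 2)⁻¹ := by
  have hc : cosh x ≠ 0 := (cosh_pos x).ne'
  rw [tanh_eq_sinh_div_cosh, div_pow, sinh_sq]
  field_simp
  ring

lemma tanh_sq_le_one (x : ℝ) : tanh x ^ 2 ≤ 1 := by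
  have : 0 < (cosh x ^ 2)⁻¹ := by positivity
  linarith [one_sub_tanh_sq x]

lemma abs_tanh_le_one (x : ℝ) : |tanh x| ≤ 1 :=
  abs_le_one_iff_mul_self_le_one.2 (by nlinarith [tanh_sq_le_one x])

lemma tanh_sq_le_tanh_sq {x y : ℝ} (h : |x| ≤ |y|) : tanh x ^ 2 ≤ tanh y ^ 2 := by
  have hcosh : cosh x ^ 2 ≤ cosh y ^ 2 :=
    pow_le_pow_left₀ (cosh_pos x).le (cosh_le_cosh.2 h) 2
  have := inv_anti₀ (by positivity) hcosh
  linarith [one_sub_tanh_sq x, one_sub_tanh_sq y]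

lemma hasDerivAt_tanh (x : ℝ) : HasDerivAt tanh (1 - tanh x ^ 2) x := by
  have hquot := (hasDerivAt_sinh x).div (hasDerivAt_cosh x) (cosh_pos x).ne'
  rw [show sinh / cosh = tanh from funext fun y => (tanh_eq_sinh_div_cosh y).symm] at hquot
  refine hquot.congr_deriv ?_
  rw [one_sub_tanh_sq, ← one_div, ← cosh_sq_sub_sinh_sq x]
  ring

@[fun_prop]
lemma continuous_tanh : Continuous tanh :=
  continuous_iff_continuousAt.2 fun x => (hasDerivAt_tanh x).continuousAt

lemma hasDerivAt_log_cosh (x : ℝ) : HasDerivAt (fun y => log (cosh y)) (tanh x) x := by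
  simpa only [← tanh_eq_sinh_div_cosh] using (hasDerivAt_cosh x).log (cosh_pos x).ne'

lemma abs_log_cosh_le (x : ℝ) : |log (cosh x)| ≤ |x| := by
  rw [abs_of_nonneg (log_nonneg (one_le_cosh x)), log_le_iff_le_exp (cosh_pos x),
    ← cosh_abs, cosh_eq]
  linarith [exp_le_exp.2 (neg_le_self (abs_nonneg x))]

end Real

namespace ProbabilityTheory

lemma hasDerivAt_gaussianPDFReal (μ : ℝ) (v : ℝ≥0) (x : ℝ) :
    HasDerivAt (gaussianPDFReal μ v) (-((x - μ) / v) * gaussianPDFReal μ v x) x := by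
  have hexponent : HasDerivAt (fun y => -(y - μ) ^ 2 / (2 * v)) (-((x - μ) / v)) x :=
    ((((hasDerivAt_id x).sub_const μ).pow 2).neg.div_const _).congr_deriv
      (by simp only [Nat.cast_ofNat, id_eq, Nat.add_one_sub_one, pow_one, mul_one]; ring)
  rw [gaussianPDFReal_def]
  exact (hexponent.exp.const_mul _).congr_deriv (by ring)

lemma integrable_gaussianReal_iff {μ : ℝ} {v : ℝ≥0} (hv : v ≠ 0) {f : ℝ → ℝ} :
    Integrable f (gaussianReal μ v) ↔ Integrable (fun x => gaussianPDFReal μ v x * f x) := by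
  rw [gaussianReal_of_var_ne_zero _ hv, integrable_withDensity_iff_integrable_smul'
    (measurable_gaussianPDF μ v) (ae_of_all _ fun _ => gaussianPDF_lt_top)]
  simp [gaussianPDF, ENNReal.toReal_ofReal (gaussianPDFReal_nonneg μ v _)]

lemma integrable_id_gaussianReal (μ : ℝ) (v : ℝ≥0) :
    Integrable (fun x => x) (gaussianReal μ v) :=
  memLp_one_iff_integrable.1 (memLp_id_gaussianReal 1)

/-- **Stein's lemma**, i.e. Gaussian integration by parts. -/
lemma integral_sub_mul_gaussianReal {μ : ℝ} {v : ℝ≥0} {f f' : ℝ → ℝ}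
    (hf : ∀ x, HasDerivAt f (f' x) x) {C : ℝ} (hfC : ∀ x, |f x| ≤ C)
    (hf' : Integrable f' (gaussianReal μ v)) :
    ∫ x, (x - μ) * f x ∂gaussianReal μ v = v * ∫ x, f' x ∂gaussianReal μ v := by
  rcases eq_or_ne v 0 with rfl | hv
  · simp only [gaussianReal_zero_var, integral_dirac, sub_self, zero_mul, NNReal.coe_zero]
  have hv' : (v : ℝ) ≠ 0 := mod_cast hv
  have hf_cont : Continuous f := continuous_iff_continuousAt.2 fun x => (hf x).continuousAt
  have hφx : Integrable (fun x => gaussianPDFReal μ v x * (x - μ)) :=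
    (integrable_gaussianReal_iff hv).1
      ((integrable_id_gaussianReal μ v).sub (integrable_const μ))
  have hfφ' : Integrable (fun x => f x * (-((x - μ) / v) * gaussianPDFReal μ v x)) := by
    refine (hφx.norm.const_mul (C / v)).mono' (by fun_prop) (ae_of_all _ fun x => ?_)
    have hφ := gaussianPDFReal_nonneg μ v x
    simp only [norm_eq_abs, abs_mul, abs_neg, abs_div, NNReal.abs_eq, abs_of_nonneg hφ]
    calc |f x| * (|x - μ| / v * gaussianPDFReal μ v x)
        ≤ C * (|x - μ| / v * gaussianPDFReal μ v x) := by gcongr; exact hfC x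
      _ = C / v * (gaussianPDFReal μ v x * |x - μ|) := by ring
  have hf'φ : Integrable (fun x => f' x * gaussianPDFReal μ v x) := by
    simpa only [mul_comm] using (integrable_gaussianReal_iff hv).1 hf'
  have hfφ : Integrable (fun x => f x * gaussianPDFReal μ v x) :=
    (integrable_gaussianPDFReal μ v).bdd_mul hf_cont.aestronglyMeasurable
      (ae_of_all _ fun x => (norm_eq_abs _).trans_le (hfC x))
  have hparts := integral_mul_deriv_eq_deriv_mul_of_integrable (fun x _ => hf x)
    (fun x _ => hasDerivAt_gaussianPDFReal μ v x) hfφ' hf'φ hfφ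
  rw [integral_gaussianReal_eq_integral_smul hv, integral_gaussianReal_eq_integral_smul hv]
  calc ∫ x, gaussianPDFReal μ v x • ((x - μ) * f x)
      = -v * ∫ x, f x * (-((x - μ) / v) * gaussianPDFReal μ v x) := by
        rw [← integral_const_mul]
        congr 1 with x
        field_simp
        ring
    _ = v * ∫ x, gaussianPDFReal μ v x • f' x := by
        simp only [hparts, smul_eq_mul, mul_comm (gaussianPDFReal μ v _)]
        ring

section LogCosh

variable {μ : Measure ℝ}

lemma integrable_log_cosh_mul (hμ : Integrable (fun x => x) μ) (s : ℝ) :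
    Integrable (fun x => log (cosh (x * s))) μ :=
  (hμ.norm.mul_const |s|).mono'
    ((continuous_cosh.comp (continuous_mul_const s)).log
      fun _ => (cosh_pos _).ne').aestronglyMeasurable
    (ae_of_all _ fun x => by
      simpa only [norm_eq_abs, abs_mul] using abs_log_cosh_le (x * s))

lemma integrable_tanh_sq_mul [IsFiniteMeasure μ] (s : ℝ) :
    Integrable (fun x => tanh (x * s) ^ 2) μ :=
  .of_bound (by fun_prop) 1 (ae_of_all _ fun x => by
    simpa only [norm_pow, norm_eq_abs, sq_abs] using tanh_sq_le_one _)

lemma integral_tanh_sq_mul_le [IsFiniteMeasure μ] {s t : ℝ} (h : |s| ≤ |t|) :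
    ∫ x, tanh (x * s) ^ 2 ∂μ ≤ ∫ x, tanh (x * t) ^ 2 ∂μ :=
  integral_mono (integrable_tanh_sq_mul s) (integrable_tanh_sq_mul t) fun x =>
    tanh_sq_le_tanh_sq (by rw [abs_mul, abs_mul]; gcongr)

lemma hasDerivAt_integral_log_cosh_mul (hμ : Integrable (fun x => x) μ) (s : ℝ) :
    HasDerivAt (fun t => ∫ x, log (cosh (x * t)) ∂μ) (∫ x, x * tanh (x * s) ∂μ) s := by
  refine (hasDerivAt_integral_of_dominated_loc_of_deriv_le (F' := fun t x => x * tanh (x * t))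
    (bound := fun x => |x|) univ_mem
    (Eventually.of_forall fun t => (integrable_log_cosh_mul hμ t).aestronglyMeasurable)
    (integrable_log_cosh_mul hμ s) (by fun_prop)
    (ae_of_all _ fun x t _ => ?_) hμ.abs (ae_of_all _ fun x t _ => ?_)).2
  · rw [norm_mul, norm_eq_abs, norm_eq_abs]
    exact mul_le_of_le_one_right (abs_nonneg x) (abs_tanh_le_one _)
  · exact ((hasDerivAt_log_cosh (x * t)).comp t ((hasDerivAt_id t).const_mul x)).congr_deriv
      (by ring)

lemma continuous_integral_log_cosh_mul (hμ : Integrable (fun x => x) μ) :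
    Continuous fun t => ∫ x, log (cosh (x * t)) ∂μ :=
  continuous_iff_continuousAt.2 fun s => (hasDerivAt_integral_log_cosh_mul hμ s).continuousAt

end LogCosh

lemma integral_mul_tanh_mul_gaussianReal (v : ℝ≥0) (s : ℝ) :
    ∫ x, x * tanh (x * s) ∂gaussianReal 0 v
      = v * s * (1 - ∫ x, tanh (x * s) ^ 2 ∂gaussianReal 0 v) := by
  have hderiv (x : ℝ) : HasDerivAt (fun y => tanh (y * s)) ((1 - tanh (x * s) ^ 2) * s) x :=
    (hasDerivAt_tanh (x * s)).comp (h := fun y => y * s) x (hasDerivAt_mul_const s)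
  have hint := (integrable_const 1).sub (integrable_tanh_sq_mul (μ := gaussianReal 0 v) s)
  have hstein := integral_sub_mul_gaussianReal hderiv (fun x => abs_tanh_le_one (x * s))
    (hint.mul_const s)
  simp only [sub_zero] at hstein
  rw [hstein, integral_mul_const, integral_sub (integrable_const 1) (integrable_tanh_sq_mul s)]
  simp only [integral_const, probReal_univ, smul_eq_mul, mul_one]
  ring

lemma hasDerivAt_integral_log_cosh_mul_gaussianReal (v : ℝ≥0) (s : ℝ) :
    HasDerivAt (fun t => ∫ x, log (cosh (x * t)) ∂gaussianReal 0 v)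
      (v * s * (1 - ∫ x, tanh (x * s) ^ 2 ∂gaussianReal 0 v)) s := by
  simpa only [integral_mul_tanh_mul_gaussianReal] using
    hasDerivAt_integral_log_cosh_mul (integrable_id_gaussianReal 0 v) s

end ProbabilityTheory

lemma hasDerivAt_Abar_in_p {α : ℝ} (hα : α < 1) (β q : ℝ) {p : ℝ} (hp : 0 < p) :
    HasDerivAt (fun p' => Abar α β p' q)
      (α * (1 - α) * β ^ 2 *
        (q - ∫ g, tanh (g * β * √(2 * (1 - α) * p)) ^ 2 ∂gaussianReal 0 1)) p := by
  have hc : 0 < 2 * (1 - α) * p := by have : 0 < 1 - α := sub_pos.2 hα; positivity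
  have hs : HasDerivAt (fun p' => β * √(2 * (1 - α) * p'))
      (β * (2 * (1 - α) / (2 * √(2 * (1 - α) * p)))) p :=
    ((hasDerivAt_const_mul (2 * (1 - α))).sqrt hc.ne').const_mul β
  have hL := (hasDerivAt_integral_log_cosh_mul_gaussianReal 1 _).comp p hs
  have hA := (((hL.const_mul α).const_add (log 2)).add_const
    ((1 - α) * ∫ g, log (cosh (g * β * √(2 * α * q))) ∂gaussianReal 0 1)).add
    (((hasDerivAt_id p).const_sub 1).const_mul (α * (1 - α) * β ^ 2 * (1 - q)))
  simp only [Function.comp_def, ← mul_assoc] at hA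
  refine hA.congr_deriv ?_
  field_simp
  push_cast
  ring

lemma monotone_integral_tanh_sq_mul_sqrt {c : ℝ} (hc : 0 ≤ c) (β : ℝ) :
    Monotone fun p => ∫ g, tanh (g * β * √(c * p)) ^ 2 ∂gaussianReal 0 1 := by
  intro p₁ p₂ h
  simp only [mul_assoc]
  refine integral_tanh_sq_mul_le ?_
  rw [abs_mul, abs_mul]
  gcongr

lemma continuous_Abar_in_p (α β q : ℝ) : Continuous fun p => Abar α β p q := by
  have hL : Continuous fun p =>
      ∫ g, log (cosh (g * (β * √(2 * ((1 - α) * p))))) ∂gaussianReal 0 1 :=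
    (continuous_integral_log_cosh_mul (integrable_id_gaussianReal 0 1)).comp (by fun_prop)
  simp only [Abar, mul_assoc]
  fun_prop

theorem Abar_concave_in_p_general (α β : ℝ) (hα : α ∈ Set.Ioo (0 : ℝ) 1)
    (q : ℝ) :
    (∀ p ∈ Set.Ioo (0 : ℝ) 1,
      HasDerivAt (fun p' => Abar α β p' q)
        (α * (1 - α) * β ^ 2 *
          (q - ∫ g : ℝ, (Real.tanh (g * β * Real.sqrt (2 * (1 - α) * p))) ^ 2
              ∂(gaussianReal 0 1))) p) ∧
    MonotoneOn (fun p => ∫ g : ℝ,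
        (Real.tanh (g * β * Real.sqrt (2 * (1 - α) * p))) ^ 2 ∂(gaussianReal 0 1))
      (Set.Ici (0 : ℝ)) ∧
    ConcaveOn ℝ (Set.Icc (0 : ℝ) 1) (fun p => Abar α β p q) := by
  obtain ⟨hα₀, hα₁⟩ := hα
  have hderiv (p : ℝ) (hp : p ∈ Ioo (0 : ℝ) 1) := hasDerivAt_Abar_in_p hα₁ β q hp.1
  have hmono := monotone_integral_tanh_sq_mul_sqrt (by linarith : (0 : ℝ) ≤ 2 * (1 - α)) β
  refine ⟨hderiv, hmono.monotoneOn _, ?_⟩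
  refine AntitoneOn.concaveOn_of_deriv (convex_Icc 0 1) (continuous_Abar_in_p α β q).continuousOn
    ?_ ?_ <;> rw [interior_Icc]
  · exact fun p hp => (hderiv p hp).differentiableAt.differentiableWithinAt
  · intro p₁ hp₁ p₂ hp₂ h
    rw [(hderiv p₁ hp₁).deriv, (hderiv p₂ hp₂).deriv]
    have hcoef : 0 ≤ α * (1 - α) * β ^ 2 := by
      have : 0 ≤ 1 - α := by linarith
      positivity
    exact mul_le_mul_of_nonneg_left (sub_le_sub_left (hmono h) q) hcoef

theorem Abar_concave_in_p (α β : ℝ) (hα : α ∈ Set.Ioo (0 : ℝ) 1) (hβ : 0 < β)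
    (q : ℝ) (hq : q ∈ Set.Icc (0 : ℝ) 1) :
    (∀ p ∈ Set.Ioo (0 : ℝ) 1,
      HasDerivAt (fun p' => Abar α β p' q)
        (α * (1 - α) * β ^ 2 *
          (q - ∫ g : ℝ, (Real.tanh (g * β * Real.sqrt (2 * (1 - α) * p))) ^ 2
              ∂(gaussianReal 0 1))) p) ∧
    MonotoneOn (fun p => ∫ g : ℝ,
        (Real.tanh (g * β * Real.sqrt (2 * (1 - α) * p))) ^ 2 ∂(gaussianReal 0 1))
      (Set.Ici (0 : ℝ)) ∧
    ConcaveOn ℝ (Set.Icc (0 : ℝ) 1) (fun p => Abar α β p q) :=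
  Abar_concave_in_p_general α β hα q
end

section
/- If 4β⁴α(1-α) ≤ 1, then the only solution in [0,1]² of the replica-symmetric self-consistency system q̄ = E_g[tanh²(gβ√(2(1-α)p̄))], p̄ = E_g[tanh²(gβ√(2α q̄))] is q̄ = p̄ = 0. -/
/-!
Since `tanh² x < x²` for `x ≠ 0` and `E[g²] = 1`, we get `E[tanh²(g c)] < c²` for `c ≠ 0`. If `q̄` and
`p̄` are both positive, the two equations therefore give `q̄ < 2β²(1-α) p̄` and `p̄ < 2β²α q̄`, hence
`q̄ < 4β⁴α(1-α) q̄ ≤ q̄`. So one of them vanishes, and then the other equation forces the second one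
to vanish too.
-/

open MeasureTheory ProbabilityTheory Real

lemma sinh_lt_mul_cosh {x : ℝ} (hx : 0 < x) : sinh x < x * cosh x := by
  obtain ⟨ξ, ⟨hξ0, hξx⟩, hξ⟩ := exists_hasDerivAt_eq_slope sinh cosh hx
    continuous_sinh.continuousOn fun y _ => hasDerivAt_sinh y
  rw [sinh_zero, sub_zero, sub_zero, eq_div_iff hx.ne'] at hξ
  rw [← hξ, mul_comm]
  exact mul_lt_mul_of_pos_left (cosh_lt_cosh.2 (by rwa [abs_of_pos hξ0, abs_of_pos hx])) hx

lemma tanh_sq_lt_sq {x : ℝ} (hx : x ≠ 0) : tanh x ^ 2 < x ^ 2 := by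
  have h := sinh_lt_mul_cosh (abs_pos.2 hx)
  rw [← abs_sinh, cosh_abs] at h
  rw [tanh_eq_sinh_div_cosh, div_pow, div_lt_iff₀ (by positivity), ← mul_pow, sq_lt_sq,
    abs_mul, abs_of_pos (cosh_pos x)]
  exact h

lemma tanh_sq_le_sq (x : ℝ) : tanh x ^ 2 ≤ x ^ 2 := by
  rcases eq_or_ne x 0 with rfl | hx
  · simp
  · exact (tanh_sq_lt_sq hx).le

lemma Real.continuous_tanh_s14 : Continuous tanh := by
  simp_rw [funext tanh_eq_sinh_div_cosh]
  exact continuous_sinh.div continuous_cosh fun x => (cosh_pos x).ne'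

lemma integral_lt_integral_of_ae_lt {α : Type*} [MeasurableSpace α] {μ : Measure α} [NeZero μ]
    {f g : α → ℝ} (hf : Integrable f μ) (hg : Integrable g μ) (hlt : ∀ᵐ x ∂μ, f x < g x) :
    ∫ x, f x ∂μ < ∫ x, g x ∂μ := by
  rw [← sub_pos, ← integral_sub hg hf]
  refine (integral_pos_iff_support_of_nonneg_ae
    (hlt.mono fun x hx => (sub_pos.2 hx).le) (hg.sub hf)).2 ?_
  have hsupp : Function.support (fun x => g x - f x) =ᵐ[μ] (Set.univ : Set α) :=
    Filter.eventuallyEq_univ.2 (hlt.mono fun x hx => (sub_pos.2 hx).ne')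
  rw [measure_congr hsupp]
  exact Measure.measure_univ_pos.2 (NeZero.ne μ)

lemma integral_tanh_mul_sq_lt {μ : Measure ℝ} [NullSingletonClass μ] [NeZero μ]
    (hsq : Integrable (fun g => g ^ 2) μ) {c : ℝ} (hc : c ≠ 0) :
    ∫ g, tanh (g * c) ^ 2 ∂μ < c ^ 2 * ∫ g, g ^ 2 ∂μ := by
  have hsq_c : Integrable (fun g => (g * c) ^ 2) μ := by
    simpa only [mul_pow, mul_comm] using hsq.const_mul (c ^ 2)
  have htanh : Integrable (fun g => tanh (g * c) ^ 2) μ :=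
    hsq_c.mono' ((continuous_tanh_s14.comp (continuous_mul_const c)).pow 2).aestronglyMeasurable
      (ae_of_all _ fun g => by rw [norm_of_nonneg (sq_nonneg _)]; exact tanh_sq_le_sq _)
  rw [← integral_const_mul]
  simp_rw [← mul_pow, mul_comm c]
  exact integral_lt_integral_of_ae_lt htanh hsq_c
    ((μ.ae_ne 0).mono fun g hg => tanh_sq_lt_sq (mul_ne_zero hg hc))

lemma integral_sq_gaussianReal (μ : ℝ) (v : NNReal) :
    ∫ x, x ^ 2 ∂gaussianReal μ v = μ ^ 2 + v := by
  have h := variance_eq_sub (memLp_id_gaussianReal (μ := μ) (v := v) 2)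
  simp only [variance_id_gaussianReal, Pi.pow_apply, id_eq, integral_id_gaussianReal] at h
  linarith

lemma integral_tanh_mul_mul_sqrt_sq_lt {β t : ℝ} (hβ : β ≠ 0) (ht : 0 < t) :
    ∫ g, tanh (g * β * √t) ^ 2 ∂gaussianReal 0 1 < β ^ 2 * t := by
  have := nullSingletonClass_gaussianReal (μ := 0) one_ne_zero
  have h := integral_tanh_mul_sq_lt (memLp_id_gaussianReal (μ := 0) (v := 1) 2).integrable_sq
    (c := β * √t) (by positivity)
  rw [integral_sq_gaussianReal, mul_pow, sq_sqrt ht.le] at h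
  simpa only [mul_assoc, NNReal.coe_one, zero_pow two_ne_zero, zero_add, mul_one] using h

theorem RS_high_temperature_trivial_solution (α β q p : ℝ)
    (hα : α ∈ Set.Ioo (0 : ℝ) 1) (hβ : 0 < β)
    (hcond : 4 * β ^ 4 * α * (1 - α) ≤ 1)
    (hqmem : q ∈ Set.Icc (0 : ℝ) 1) (hpmem : p ∈ Set.Icc (0 : ℝ) 1)
    (hq : q = ∫ g : ℝ, (Real.tanh (g * β * Real.sqrt (2 * (1 - α) * p))) ^ 2
        ∂(gaussianReal 0 1))
    (hp : p = ∫ g : ℝ, (Real.tanh (g * β * Real.sqrt (2 * α * q))) ^ 2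
        ∂(gaussianReal 0 1)) :
    q = 0 ∧ p = 0 := by
  obtain ⟨hα0, hα1⟩ := hα
  have hα1' : 0 < 1 - α := sub_pos.2 hα1
  rcases hqmem.1.eq_or_lt with rfl | hq0
  · simpa using hp
  rcases hpmem.1.eq_or_lt with rfl | hp0
  · exact absurd (by simpa using hq) hq0.ne'
  have hqp : q < β ^ 2 * (2 * (1 - α) * p) :=
    hq ▸ integral_tanh_mul_mul_sqrt_sq_lt hβ.ne' (by positivity)
  have hpq : p < β ^ 2 * (2 * α * q) :=
    hp ▸ integral_tanh_mul_mul_sqrt_sq_lt hβ.ne' (by positivity)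
  refine absurd ?_ (lt_irrefl q)
  calc q < β ^ 2 * (2 * (1 - α) * p) := hqp
    _ < β ^ 2 * (2 * (1 - α) * (β ^ 2 * (2 * α * q))) := by gcongr
    _ = 4 * β ^ 4 * α * (1 - α) * q := by ring
    _ ≤ 1 * q := by gcongr
    _ = q := one_mul q
end
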